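/- For a ∈ ℂ and n ∈ ℕ let (a)_n denote the Pochhammer rising factorial a(a+1)⋯(a+n−1). Let r, χ, k, b, c, ω ∈ ℂ with χ ≠ 0, k ≠ 0 and b ≠ 0, and set λ = (ω/k − c − 2k/(iχ))/b and μ = ir²χkb. Then the function φ : ℝ → ℂ defined by φ(y) = (y − λ)²·Σ_{n≥0} ((1/3)_n/((4/3)_n(5/3)_n))·(μ(y − λ)³/9)ⁿ/n! is four times differentiable and satisfies φ⁗(y) − [2r²k² + ir²χk(by + c − ω/k)]·φ''(y) = 0 for all y ∈ ℝ. -/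

import Mathlib

open Complex

/-!
Write `z = y - λ`. Then `φ = ∑ aₙ z^{3n+2}` with `aₙ = (1/3)ₙ / ((4/3)ₙ (5/3)ₙ n!) · (μ/9)ⁿ`, and
`a_{n+1} (3n+3)(3n+4)(3n+5) = μ (3n+1) aₙ`. This recurrence gives `‖aₙ‖ ≤ ‖μ‖ⁿ / n!`, so the
series can be differentiated term by term any number of times. Termwise,
`(z^{3n+5})⁗ = (3n+5)(3n+4)(3n+3)(3n+2) z^{3n+1}` and `z (z^{3n+2})'' = (3n+2)(3n+1) z^{3n+1}`,
so the same recurrence says exactly `φ⁗ = μ z φ''`. Finally, the choice of `λ` makes the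
coefficient `2r²k² + ir²χk(by + c − ω/k)` equal to `μ (y − λ)`.
-/

/-- The Pochhammer rising factorial `(a)_n = a(a+1)⋯(a+n−1)`. -/
noncomputable def poch (a : ℂ) (n : ℕ) : ℂ := (ascPochhammer ℂ n).eval a

section TermwiseDerivative

def TermwiseSummable (a : ℕ → ℂ) (e : ℕ → ℕ) : Prop :=
  ∀ (j : ℕ) (R : ℝ), 0 ≤ R → Summable fun n => ‖a n‖ * (e n).descFactorial j * R ^ (e n - j)

/-- The series `∑ aₙ (y - λ)^{eₙ}` differentiated `j` times term by term. The truncated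
subtraction `eₙ - j` is harmless: the falling factorial vanishes when `j > eₙ`. -/
noncomputable def termwiseIteratedDeriv (a : ℕ → ℂ) (e : ℕ → ℕ) (lam : ℂ) (j : ℕ) (y : ℝ) : ℂ :=
  ∑' n, a n * (e n).descFactorial j * ((y : ℂ) - lam) ^ (e n - j)

variable {a : ℕ → ℂ} {e : ℕ → ℕ} (lam : ℂ)

lemma norm_termwiseIteratedDeriv_term (j n : ℕ) (y : ℝ) :
    ‖a n * (e n).descFactorial j * ((y : ℂ) - lam) ^ (e n - j)‖
      = ‖a n‖ * (e n).descFactorial j * ‖(y : ℂ) - lam‖ ^ (e n - j) := by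
  simp only [norm_mul, norm_pow, Complex.norm_natCast]

lemma hasDerivAt_ofReal_sub_pow (m : ℕ) (y : ℝ) :
    HasDerivAt (fun t : ℝ => ((t : ℂ) - lam) ^ m) (m * ((y : ℂ) - lam) ^ (m - 1)) y := by
  simpa using (((hasDerivAt_id (y : ℂ)).sub_const lam).pow m).comp_ofReal

lemma summable_termwiseIteratedDeriv_term (h : TermwiseSummable a e) (j : ℕ) (y : ℝ) :
    Summable fun n => a n * (e n).descFactorial j * ((y : ℂ) - lam) ^ (e n - j) :=
  .of_norm_bounded (h j _ (norm_nonneg _)) fun n => (norm_termwiseIteratedDeriv_term lam j n y).le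

lemma hasDerivAt_termwiseIteratedDeriv (h : TermwiseSummable a e) (j : ℕ) (y : ℝ) :
    HasDerivAt (termwiseIteratedDeriv a e lam j) (termwiseIteratedDeriv a e lam (j + 1) y) y := by
  have hball : ∀ x ∈ Metric.ball y 1, ‖(x : ℂ) - lam‖ ≤ ‖(y : ℂ) - lam‖ + 1 := by
    intro x hx
    have hxy : ‖(x : ℂ) - y‖ ≤ 1 := by
      rw [← ofReal_sub, norm_real, ← dist_eq_norm]
      exact (Metric.mem_ball.mp hx).le
    calc ‖(x : ℂ) - lam‖ = ‖((x : ℂ) - y) + ((y : ℂ) - lam)‖ := by rw [sub_add_sub_cancel]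
      _ ≤ ‖(y : ℂ) - lam‖ + 1 := by linarith [norm_add_le ((x : ℂ) - y) ((y : ℂ) - lam)]
  refine hasDerivAt_tsum_of_isPreconnected (F := ℂ)
    (g := fun n (x : ℝ) => a n * (e n).descFactorial j * ((x : ℂ) - lam) ^ (e n - j))
    (g' := fun n (x : ℝ) => a n * (e n).descFactorial (j + 1) * ((x : ℂ) - lam) ^ (e n - (j + 1)))
    (h (j + 1) (‖(y : ℂ) - lam‖ + 1) (by positivity)) Metric.isOpen_ball
    (convex_ball y 1).isPreconnected (fun n x _ => ?_) (fun n x hx => ?_)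
    (Metric.mem_ball_self one_pos) ?_ (Metric.mem_ball_self one_pos)
  · have hdesc : ((e n).descFactorial (j + 1) : ℂ) = (e n - j : ℕ) * (e n).descFactorial j := by
      rw [Nat.descFactorial_succ, Nat.cast_mul]
    rw [hdesc, ← Nat.sub_sub]
    exact ((hasDerivAt_ofReal_sub_pow lam (e n - j) x).const_mul
      (a n * (e n).descFactorial j)).congr_deriv (by ring)
  · rw [norm_termwiseIteratedDeriv_term]
    gcongr
    exact hball x hx
  · exact summable_termwiseIteratedDeriv_term lam h j y

lemma iteratedDeriv_termwiseIteratedDeriv_zero (h : TermwiseSummable a e) (j : ℕ) :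
    iteratedDeriv j (termwiseIteratedDeriv a e lam 0) = termwiseIteratedDeriv a e lam j := by
  induction j with
  | zero => exact iteratedDeriv_zero
  | succ j ih =>
    rw [iteratedDeriv_succ, ih]
    exact funext fun y => (hasDerivAt_termwiseIteratedDeriv lam h j y).deriv

lemma contDiff_termwiseIteratedDeriv_zero (h : TermwiseSummable a e) :
    ContDiff ℝ (⊤ : ℕ∞) (termwiseIteratedDeriv a e lam 0) :=
  contDiff_of_differentiable_iteratedDeriv fun j _ => by
    rw [iteratedDeriv_termwiseIteratedDeriv_zero lam h]
    exact fun y => (hasDerivAt_termwiseIteratedDeriv lam h j y).differentiableAt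

lemma termwiseSummable_of_norm_le {B : ℝ} (hB : ∀ n, ‖a n‖ ≤ B ^ n / n.factorial) (p d : ℕ) :
    TermwiseSummable a (fun n => p * n + d) := by
  intro j R hR
  set S : ℝ := 2 ^ j * (R + 1)
  refine .of_nonneg_of_le (fun n => by positivity) (fun n => ?_)
    ((Real.summable_pow_div_factorial (B * S ^ p)).mul_right (S ^ d))
  set m := p * n + d
  have hdesc : ((m.descFactorial j : ℕ) : ℝ) ≤ (2 ^ j) ^ m := by
    calc ((m.descFactorial j : ℕ) : ℝ) ≤ (m : ℝ) ^ j := mod_cast Nat.descFactorial_le_pow m j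
      _ ≤ (2 ^ m) ^ j := by gcongr; exact_mod_cast Nat.lt_two_pow_self.le
      _ = (2 ^ j) ^ m := by rw [← pow_mul, ← pow_mul, mul_comm]
  have hpow : R ^ (m - j) ≤ (R + 1) ^ m :=
    (pow_le_pow_left₀ hR (by linarith) _).trans (pow_le_pow_right₀ (by linarith) (Nat.sub_le m j))
  calc ‖a n‖ * (m.descFactorial j : ℕ) * R ^ (m - j)
      ≤ B ^ n / n.factorial * (2 ^ j) ^ m * (R + 1) ^ m := by
        have hB0 : 0 ≤ B ^ n / n.factorial := (norm_nonneg (a n)).trans (hB n)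
        gcongr
        exact hB n
    _ = (B * S ^ p) ^ n / n.factorial * S ^ d := by
      simp only [S, m, mul_pow, pow_add, pow_mul]; ring

end TermwiseDerivative

lemma poch_succ (a : ℂ) (n : ℕ) : poch a (n + 1) = poch a n * (a + n) :=
  ascPochhammer_succ_eval n a

lemma poch_ne_zero {a : ℂ} (ha : 0 < a.re) (n : ℕ) : poch a n ≠ 0 := by
  induction n with
  | zero => simp [poch]
  | succ n ih =>
    rw [poch_succ]
    refine mul_ne_zero ih fun h => ?_
    have := congrArg re h
    simp only [add_re, natCast_re, zero_re] at this
    linarith [n.cast_nonneg (α := ℝ)]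

noncomputable def eigenCoeff (μ : ℂ) (n : ℕ) : ℂ :=
  poch (1/3) n / (poch (4/3) n * poch (5/3) n) * (μ / 9) ^ n / n.factorial

lemma eigenCoeff_succ_mul (μ : ℂ) (n : ℕ) :
    eigenCoeff μ (n + 1) * ((3 * n + 3) * (3 * n + 4) * (3 * n + 5) : ℕ)
      = eigenCoeff μ n * μ * (3 * n + 1 : ℕ) := by
  have h4 := poch_ne_zero (a := 4/3) (by norm_num) n
  have h5 := poch_ne_zero (a := 5/3) (by norm_num) n
  have h4' : (3 * n + 4 : ℂ) ≠ 0 := by exact_mod_cast (by omega : 3 * n + 4 ≠ 0)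
  have h5' : (3 * n + 5 : ℂ) ≠ 0 := by exact_mod_cast (by omega : 3 * n + 5 ≠ 0)
  have hfac : (n.factorial : ℂ) ≠ 0 := Nat.cast_ne_zero.mpr n.factorial_ne_zero
  simp only [eigenCoeff, poch_succ, Nat.factorial_succ, pow_succ]
  push_cast
  rw [show (4/3 + n : ℂ) = (3 * n + 4) / 3 by ring, show (5/3 + n : ℂ) = (3 * n + 5) / 3 by ring]
  field_simp
  ring

lemma norm_eigenCoeff_le (μ : ℂ) (n : ℕ) : ‖eigenCoeff μ n‖ ≤ ‖μ‖ ^ n / n.factorial := by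
  induction n with
  | zero => simp [eigenCoeff, poch]
  | succ n ih =>
    have hrec := congrArg norm (eigenCoeff_succ_mul μ n)
    simp only [norm_mul, Complex.norm_natCast] at hrec
    push_cast at hrec
    have hD : (0 : ℝ) < (3 * n + 3) * (3 * n + 4) * (3 * n + 5) := by positivity
    have hratio : ((3 * n + 1) / ((3 * n + 3) * (3 * n + 4) * (3 * n + 5)) : ℝ) ≤ 1 / (n + 1) := by
      rw [div_le_div_iff₀ hD (by positivity)]
      nlinarith
    calc ‖eigenCoeff μ (n + 1)‖
        = ‖eigenCoeff μ n‖ * ‖μ‖ * ((3 * n + 1) / ((3 * n + 3) * (3 * n + 4) * (3 * n + 5))) := by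
          rw [mul_div_assoc', eq_div_iff hD.ne', hrec]
      _ ≤ ‖μ‖ ^ n / n.factorial * ‖μ‖ * (1 / (n + 1)) := by gcongr
      _ = ‖μ‖ ^ (n + 1) / (n + 1).factorial := by
        rw [Nat.factorial_succ, pow_succ]; push_cast; field_simp

lemma termwiseSummable_eigenCoeff (μ : ℂ) :
    TermwiseSummable (eigenCoeff μ) (fun n => 3 * n + 2) :=
  termwiseSummable_of_norm_le (norm_eigenCoeff_le μ) 3 2

lemma termwiseIteratedDeriv_eigenCoeff_four (μ lam : ℂ) (y : ℝ) :
    termwiseIteratedDeriv (eigenCoeff μ) (fun n => 3 * n + 2) lam 4 y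
      = μ * ((y : ℂ) - lam)
          * termwiseIteratedDeriv (eigenCoeff μ) (fun n => 3 * n + 2) lam 2 y := by
  rw [termwiseIteratedDeriv, termwiseIteratedDeriv, ← tsum_mul_left,
    (summable_termwiseIteratedDeriv_term lam (termwiseSummable_eigenCoeff μ) 4 y).tsum_eq_zero_add]
  simp only [show (3 * 0 + 2).descFactorial 4 = 0 by decide, Nat.cast_zero, mul_zero, zero_mul,
    zero_add]
  refine tsum_congr fun n => ?_
  rw [show 3 * (n + 1) + 2 = (3 * n + 1) + 4 by ring,
    Nat.add_descFactorial_eq_ascFactorial, Nat.add_descFactorial_eq_ascFactorial,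
    Nat.add_sub_cancel, Nat.add_sub_cancel]
  simp only [Nat.ascFactorial_succ, Nat.ascFactorial_zero]
  have hrec := eigenCoeff_succ_mul μ n
  push_cast at hrec ⊢
  linear_combination (3 * (n : ℂ) + 2) * ((y : ℂ) - lam) ^ (3 * n + 1) * hrec

lemma sq_mul_hypergeometric_eq_termwiseIteratedDeriv (μ lam : ℂ) (y : ℝ) :
    ((y : ℂ) - lam) ^ 2 * ∑' n : ℕ,
        (poch (1/3) n / (poch (4/3) n * poch (5/3) n))
          * (μ * ((y : ℂ) - lam) ^ 3 / 9) ^ n / (n.factorial : ℂ)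
      = termwiseIteratedDeriv (eigenCoeff μ) (fun n => 3 * n + 2) lam 0 y := by
  rw [termwiseIteratedDeriv, ← tsum_mul_left]
  refine tsum_congr fun n => ?_
  simp only [eigenCoeff, Nat.descFactorial_zero, Nat.cast_one, mul_one, Nat.sub_zero, pow_add,
    pow_mul, mul_div_right_comm μ, mul_pow]
  ring

/-- Configuration 3, equations (85) and (88): with `λ = (ω/k − c − 2k/(iχ))/b` and
`μ = ir²χkb`, the function
`φ(y) = (y − λ)²·₁F₂(1/3; 4/3, 5/3; μ(y − λ)³/9)` is four times differentiable
and satisfies the long-wave reduced Orr–Sommerfeld equation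
`φ⁗ − [2r²k² + ir²χk(by + c − ω/k)]φ'' = 0`. -/
theorem long_wave_linear_profile_eigenfunction
    (r χ k b c ω : ℂ) (hχ : χ ≠ 0) (hk : k ≠ 0) (hb : b ≠ 0)
    (lam μ : ℂ)
    (hlam : lam = (ω / k - c - 2 * k / (I * χ)) / b)
    (hμ : μ = I * r ^ 2 * χ * k * b)
    (φ : ℝ → ℂ)
    (hφdef : ∀ y : ℝ, φ y =
      ((y : ℂ) - lam) ^ 2 * ∑' n : ℕ,
        (poch (1/3) n / (poch (4/3) n * poch (5/3) n))
          * (μ * ((y : ℂ) - lam) ^ 3 / 9) ^ n / (n.factorial : ℂ)) :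
    ContDiff ℝ 4 φ ∧
    ∀ y : ℝ,
      iteratedDeriv 4 φ y
        - (2 * r ^ 2 * k ^ 2 + I * r ^ 2 * χ * k * (b * (y : ℂ) + c - ω / k))
            * iteratedDeriv 2 φ y = 0 := by
  have hφ : φ = termwiseIteratedDeriv (eigenCoeff μ) (fun n => 3 * n + 2) lam 0 :=
    funext fun y => (hφdef y).trans (sq_mul_hypergeometric_eq_termwiseIteratedDeriv μ lam y)
  have hsum := termwiseSummable_eigenCoeff μ
  have hcoef : ∀ y : ℝ, 2 * r ^ 2 * k ^ 2 + I * r ^ 2 * χ * k * (b * (y : ℂ) + c - ω / k)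
      = μ * ((y : ℂ) - lam) := fun y => by
    rw [hμ, hlam]
    field_simp
    ring
  subst hφ
  refine ⟨(contDiff_termwiseIteratedDeriv_zero lam hsum).of_le (WithTop.coe_le_coe.mpr le_top),
    fun y => ?_⟩
  rw [iteratedDeriv_termwiseIteratedDeriv_zero lam hsum,
    iteratedDeriv_termwiseIteratedDeriv_zero lam hsum, hcoef,
    termwiseIteratedDeriv_eigenCoeff_four, sub_self]
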